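/- (No approximately truthful equilibrium.) Suppose m, p, ε satisfy Condition 1. Let σ = (σ_1, …, σ_n) be any profile of independent probability distributions over [0,1]^m such that with probability 1, σ_i produces reports that are ε-ℓ² approximately truthful with respect to p̄ and each σ_j (j ≠ i) produces reports that are ε-ℓ² approximately truthful with respect to c. With Y ∈ {0,1}^m having independent Bernoulli(p) coordinates independent of all reports, forecaster i's expected utility E[U_i(R_i; R_{−i}, Y)] under σ is strictly less than E[U_i(r*; R_{−i}, Y)], her expected utility from unilaterally deviating to the pure report r*. In particular, no ε-ℓ² approximately truthful strategy profile is an equilibrium. -/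

import Mathlib

open MeasureTheory
open scoped Classical

set_option maxHeartbeats 1000000

noncomputable section

/-- The Euclidean (ℓ²) norm of a vector in ℝ^m. -/
def l2norm {m : ℕ} (v : Fin m → ℝ) : ℝ := Real.sqrt (∑ t, v t ^ 2)

/-- The hedged probability `p* = (1/2 + p)/2`. -/
def pstar (p : ℝ) : ℝ := (1 / 2 + p) / 2

/-- Condition 1 of the paper on `(m, p, ε)`. -/
def Cond1 (m : ℕ) (p ε : ℝ) : Prop :=
  21 ≤ m ∧
  (0 < p ∧ p < 1 / 2 - 2 * Real.sqrt ((2 / Real.sqrt m) * (1 - 2 / Real.sqrt m))) ∧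
  (0 < ε ∧ ε < 1 / 2 - Real.sqrt (pstar p * (1 - pstar p)) - 2 / Real.sqrt m)

/-- A report vector `r` is ε-ℓ² approximately truthful w.r.t. the belief vector `q`
if `(1/√m) ‖r − q‖₂ ≤ ε`. -/
def ApproxTruthful {m : ℕ} (ε : ℝ) (r q : Fin m → ℝ) : Prop :=
  (1 / Real.sqrt m) * l2norm (fun t => r t - q t) ≤ ε

/-- The winning set of the Simple Max mechanism with the quadratic score: the set of
forecasters whose report is closest in Euclidean distance to the outcome vector `y`. -/
def winner {n m : ℕ} (r : Fin n → Fin m → ℝ) (y : Fin m → ℝ) : Finset (Fin n) :=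
  Finset.univ.filter fun k => ∀ l : Fin n,
    l2norm (fun t => r k t - y t) ≤ l2norm (fun t => r l t - y t)

/-- The Simple Max utility of forecaster `i`: `1/|winner|` if `i` is in the winning set,
and `0` otherwise (ties are split uniformly). -/
def utility {n m : ℕ} (i : Fin n) (r : Fin n → Fin m → ℝ) (y : Fin m → ℝ) : ℝ :=
  (if i ∈ winner r y then (1 : ℝ) else 0) / (winner r y).card

lemma l2norm_nonneg {m : ℕ} (v : Fin m → ℝ) : 0 ≤ l2norm v := Real.sqrt_nonneg _

lemma l2norm_sq {m : ℕ} (v : Fin m → ℝ) : l2norm v ^ 2 = ∑ t, v t ^ 2 :=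
  Real.sq_sqrt (Finset.sum_nonneg fun t _ => sq_nonneg _)

lemma l2norm_eq_norm {m : ℕ} (v : Fin m → ℝ) :
    l2norm v = ‖(WithLp.equiv 2 (Fin m → ℝ)).symm v‖ := by
  rw [EuclideanSpace.norm_eq]
  unfold l2norm
  congr 1
  refine Finset.sum_congr rfl fun t _ => ?_
  rw [WithLp.equiv_symm_apply, WithLp.ofLp_toLp, Real.norm_eq_abs, sq_abs]

lemma l2norm_sub_le {m : ℕ} (a b c : Fin m → ℝ) :
    l2norm (fun t => a t - c t) ≤ l2norm (fun t => a t - b t) + l2norm (fun t => b t - c t) := by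
  have h : ∀ u v : Fin m → ℝ, l2norm (fun t => u t + v t) ≤ l2norm u + l2norm v := by
    intro u v
    rw [l2norm_eq_norm, l2norm_eq_norm, l2norm_eq_norm]
    have h : (WithLp.equiv 2 (Fin m → ℝ)).symm (fun t => u t + v t)
        = (WithLp.equiv 2 (Fin m → ℝ)).symm u + (WithLp.equiv 2 (Fin m → ℝ)).symm v := by
      ext t
      simp [WithLp.equiv_symm_apply]
    rw [h]
    exact norm_add_le _ _
  have h2 := h (fun t => a t - b t) (fun t => b t - c t)
  have he : (fun t => (a t - b t) + (b t - c t)) = fun t => a t - c t := by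
    funext t; ring
  rwa [he] at h2

lemma l2norm_sub_comm {m : ℕ} (a b : Fin m → ℝ) :
    l2norm (fun t => a t - b t) = l2norm (fun t => b t - a t) := by
  unfold l2norm
  congr 1
  exact Finset.sum_congr rfl fun t _ => by ring

lemma approx_le {m : ℕ} {ε : ℝ} {x q : Fin m → ℝ} (h : ApproxTruthful ε x q)
    (hm : 0 < Real.sqrt m) : l2norm (fun t => x t - q t) ≤ ε * Real.sqrt m := by
  unfold ApproxTruthful at h
  have h2 := mul_le_mul_of_nonneg_left h hm.le
  calc l2norm (fun t => x t - q t)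
      = Real.sqrt m * (1 / Real.sqrt m * l2norm (fun t => x t - q t)) := by
        field_simp
    _ ≤ Real.sqrt m * ε := h2
    _ = ε * Real.sqrt m := mul_comm _ _

lemma gap_aux (X c ub : ℝ) (hX0 : 0 ≤ X) (hXub : X ≤ 7 / 10) (hc0 : 0 < c) (hcub : c ≤ 1 / 10)
    (hub0 : 0 ≤ ub) (hNM : 2 * c ≤ ub ^ 2 - X ^ 2) : X + c ≤ ub := by
  by_contra h
  push_neg at h
  have hsq : ub ^ 2 < (X + c) ^ 2 := by nlinarith [mul_self_lt_mul_self hub0 h]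
  nlinarith [mul_pos hc0 (show (0:ℝ) < 2 - 2 * X - c by linarith)]

lemma kf_aux (sm R ub ε : ℝ) (hsm29 : 29 ≤ sm) (hε0 : 0 < ε) (hε067 : ε < 67 / 1000)
    (hR35 : 35 / 100 ≤ R) (hRub : R ≤ 1 / 2) (hub0 : 0 ≤ ub) (hub1 : ub ≤ 1)
    (hgap : 2 * ε + R + 2 / sm ≤ ub) :
    ∀ U : ℝ, 0 ≤ U → sm ^ 2 * ub ^ 2 - 1 ≤ U ^ 2 →
      (U ^ 2 + sm ^ 2 * (R ^ 2 - 2 * ε ^ 2)) / 2 + 3 / 2 < (U - ε * sm) ^ 2 := by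
  intro U hU0 hU2
  have hsm0 : (0:ℝ) < sm := by linarith
  have hq' : sm * (2 / sm) = 2 := by field_simp
  have hE0 : 0 ≤ ε * sm := by positivity
  have hKV : 2 * (ε * sm) + sm * R + 2 ≤ sm * ub := by
    have h1 := mul_le_mul_of_nonneg_left hgap hsm0.le
    nlinarith [h1, hq']
  have hWlb : (10 : ℝ) ≤ sm * R := by nlinarith [mul_le_mul hsm29 hR35 (by norm_num) (by linarith)]
  have hV12 : (12 : ℝ) ≤ sm * ub := by linarith
  have hUV : sm * ub - 1 / 20 ≤ U := by
    by_contra h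
    push_neg at h
    have hsq : U ^ 2 < (sm * ub - 1 / 20) ^ 2 := by
      nlinarith [mul_self_lt_mul_self hU0 h]
    nlinarith [hsq, hU2, hV12]
  have hUE : sm * R + 39 / 20 ≤ U - 2 * (ε * sm) := by linarith
  have hW0 : (0 : ℝ) ≤ sm * R := by linarith
  have hfin : (sm * R) ^ 2 + 3 < (U - 2 * (ε * sm)) ^ 2 := by nlinarith [hUE, hW0]
  nlinarith [hfin]

lemma key_core (p ε sm w R ub : ℝ)
    (hp0 : 0 < p) (hp2 : p < 1 / 2) (hε0 : 0 < ε) (hsm0 : 0 < sm)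
    (hw0 : 0 ≤ w) (hw2 : w ^ 2 = 1 / 4 - (1 / 4 - p / 2) ^ 2)
    (hεc : ε < 1 / 2 - w - 2 / sm)
    (hR0 : 0 ≤ R) (hR2 : R ^ 2 = (2 * (1 / 4 + p / 2) ^ 2 - p ^ 2) + 2 * ε ^ 2)
    (hub0 : 0 ≤ ub) (hub2 : ub ^ 2 = 2 * (1 / 2 - ε) ^ 2 - (2 * (1 / 4 + p / 2) ^ 2 - p ^ 2)) :
    29 ≤ sm ∧ ε < 1 / 4 - p / 2 ∧ 2 * ε + R + 2 / sm ≤ ub ∧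
    (∀ U : ℝ, 0 ≤ U → sm ^ 2 * ub ^ 2 - 1 ≤ U ^ 2 →
      (U ^ 2 + sm ^ 2 * (R ^ 2 - 2 * ε ^ 2)) / 2 + 3 / 2 < (U - ε * sm) ^ 2) := by
  have hp1 : 0 < p * (1 - p) := mul_pos hp0 (by linarith)
  have hwlb : (433 : ℝ) / 1000 < w :=
    lt_of_pow_lt_pow_left₀ 2 hw0 (by nlinarith)
  have hwub : w < 1 / 2 :=
    lt_of_pow_lt_pow_left₀ 2 (by norm_num) (by nlinarith)
  have hq0 : 0 < 2 / sm := by positivity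
  have hε067 : ε < 67 / 1000 := by linarith
  have hsm29 : (29 : ℝ) ≤ sm := by
    have h1 : 2 / sm < 67 / 1000 := by linarith
    rw [div_lt_iff₀ hsm0] at h1
    linarith
  have hqle : 2 / sm ≤ 2 / 29 := by
    rw [div_le_div_iff₀ hsm0 (by norm_num)]
    linarith
  have hwd : 1 / 4 + p / 2 ≤ w :=
    le_of_pow_le_pow_left₀ two_ne_zero hw0 (by nlinarith)
  have hεd : ε < 1 / 4 - p / 2 := by linarith
  have hεw : ε ≤ 1 / 2 - w := by linarith
  have hε2 : ε ^ 2 ≤ (1 / 2 - w) ^ 2 := pow_le_pow_left₀ hε0.le hεw 2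
  have hRub : R ≤ 2 * w - 1 / 2 :=
    le_of_pow_le_pow_left₀ two_ne_zero (by linarith) (by nlinarith)
  have hRlb : (35 : ℝ) / 100 ≤ R :=
    le_of_pow_le_pow_left₀ two_ne_zero hR0 (by nlinarith)
  have hz1 : 0 ≤ (w + ε) * (1 - 2 * (w + ε)) :=
    mul_nonneg (by linarith) (by linarith)
  have hεR : ε * R ≤ ε * (2 * w - 1 / 2) := mul_le_mul_of_nonneg_left hRub hε0.le
  have hNM : 2 * (2 / sm) ≤ ub ^ 2 - (2 * ε + R) ^ 2 := by
    nlinarith [hub2, hR2, hεR, hz1, hεc, hw2]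
  have hubub : ub ≤ 1 :=
    le_of_pow_le_pow_left₀ two_ne_zero (by norm_num) (by nlinarith [sq_nonneg ε])
  have hgap : 2 * ε + R + 2 / sm ≤ ub :=
    gap_aux (2 * ε + R) (2 / sm) ub (by linarith) (by linarith) hq0 (by linarith) hub0 hNM
  exact ⟨hsm29, hεd, hgap,
    kf_aux sm R ub ε hsm29 hε0 hε067 hRlb (by linarith) hub0 hubub hgap⟩

lemma key_arith (m : ℕ) (p ε : ℝ) (hm : 21 ≤ m)
    (hp0 : 0 < p) (hp2 : p < 1 / 2) (hε0 : 0 < ε)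
    (hεc : ε < 1 / 2 - Real.sqrt (pstar p * (1 - pstar p)) - 2 / Real.sqrt m) :
    ∃ Rr : ℝ, 0 < Real.sqrt m ∧
    ε < 1 / 4 - p / 2 ∧
    (1 : ℝ) / 8 ≤ 2 * pstar p ^ 2 - p ^ 2 ∧
    (0:ℝ) ≤ 2 * (1 / 2 - ε) ^ 2 - (2 * pstar p ^ 2 - p ^ 2) ∧
    0 ≤ Rr ∧
    Rr ^ 2 = (2 * pstar p ^ 2 - p ^ 2) + 2 * ε ^ 2 ∧
    (∀ U : ℝ, 0 ≤ U →
      m * (2 * (1 / 2 - ε) ^ 2 - (2 * pstar p ^ 2 - p ^ 2)) ≤ U ^ 2 →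
      (2 * ε + Rr) * Real.sqrt m + 2 ≤ U) ∧
    (∀ U : ℝ, 0 ≤ U →
      m * (2 * (1 / 2 - ε) ^ 2 - (2 * pstar p ^ 2 - p ^ 2)) - 1 ≤ U ^ 2 →
      (U ^ 2 + m * (2 * pstar p ^ 2 - p ^ 2)) / 2 + 3 / 2 < (U - ε * Real.sqrt m) ^ 2) := by
  have hm21 : (21 : ℝ) ≤ (m : ℝ) := by exact_mod_cast hm
  have hsm0 : 0 < Real.sqrt m := Real.sqrt_pos.mpr (by linarith)
  have hsm2 : Real.sqrt m ^ 2 = (m : ℝ) := Real.sq_sqrt (by linarith)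
  have hP : pstar p = 1 / 4 + p / 2 := by unfold pstar; ring
  have hParg : 0 ≤ pstar p * (1 - pstar p) := by nlinarith
  have hw2 : Real.sqrt (pstar p * (1 - pstar p)) ^ 2 = 1 / 4 - (1 / 4 - p / 2) ^ 2 := by
    rw [Real.sq_sqrt hParg, hP]; ring
  have hS2 : (2 * pstar p ^ 2 - p ^ 2) = 2 * (1 / 4 + p / 2) ^ 2 - p ^ 2 := by rw [hP]
  have hS2pos : (0:ℝ) ≤ (2 * pstar p ^ 2 - p ^ 2) + 2 * ε ^ 2 := by nlinarith [sq_nonneg ε]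
  have hR2 : Real.sqrt ((2 * pstar p ^ 2 - p ^ 2) + 2 * ε ^ 2) ^ 2
      = (2 * (1 / 4 + p / 2) ^ 2 - p ^ 2) + 2 * ε ^ 2 := by
    rw [Real.sq_sqrt hS2pos, hS2]
  have hP2 : pstar p ^ 2 = (1 / 4 + p / 2) ^ 2 := by rw [hP]
  have hw0 := Real.sqrt_nonneg (pstar p * (1 - pstar p))
  have hwlb : (433:ℝ) / 1000 < Real.sqrt (pstar p * (1 - pstar p)) :=
    lt_of_pow_lt_pow_left₀ 2 hw0 (by nlinarith [hw2, mul_pos hp0 (show (0:ℝ) < 1 - p by linarith)])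
  have hq0 : (0:ℝ) < 2 / Real.sqrt m := by positivity
  have hε067 : ε < 67 / 1000 := by linarith
  have hB2pos : (0:ℝ) ≤ 2 * (1 / 2 - ε) ^ 2 - (2 * pstar p ^ 2 - p ^ 2) := by
    nlinarith [hP2, sq_nonneg (2 * p - 1), sq_nonneg (1 / 2 - ε - 433 / 1000)]
  have hub2 : Real.sqrt (2 * (1 / 2 - ε) ^ 2 - (2 * pstar p ^ 2 - p ^ 2)) ^ 2
      = 2 * (1 / 2 - ε) ^ 2 - (2 * (1 / 4 + p / 2) ^ 2 - p ^ 2) := by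
    rw [Real.sq_sqrt hB2pos, hS2]
  obtain ⟨hsm29, hεd, hgap, hKF⟩ := key_core p ε (Real.sqrt m)
    (Real.sqrt (pstar p * (1 - pstar p)))
    (Real.sqrt ((2 * pstar p ^ 2 - p ^ 2) + 2 * ε ^ 2))
    (Real.sqrt (2 * (1 / 2 - ε) ^ 2 - (2 * pstar p ^ 2 - p ^ 2)))
    hp0 hp2 hε0 hsm0 (Real.sqrt_nonneg _) hw2 hεc (Real.sqrt_nonneg _) hR2
    (Real.sqrt_nonneg _) hub2
  have hS2lb : (1:ℝ) / 8 ≤ 2 * pstar p ^ 2 - p ^ 2 := by nlinarith [hP2, mul_pos hp0 (show (0:ℝ) < 1 - p by linarith)]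
  refine ⟨Real.sqrt ((2 * pstar p ^ 2 - p ^ 2) + 2 * ε ^ 2), hsm0, hεd, hS2lb, hB2pos,
    Real.sqrt_nonneg _, by rw [hR2, hS2], ?_, ?_⟩
  · -- KC2
    intro U hU0 hU2
    have h1 : Real.sqrt (m * (2 * (1 / 2 - ε) ^ 2 - (2 * pstar p ^ 2 - p ^ 2))) ≤ U := by
      calc Real.sqrt (m * (2 * (1 / 2 - ε) ^ 2 - (2 * pstar p ^ 2 - p ^ 2)))
          ≤ Real.sqrt (U ^ 2) := Real.sqrt_le_sqrt hU2
        _ = U := Real.sqrt_sq hU0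
    have h2 : Real.sqrt (m * (2 * (1 / 2 - ε) ^ 2 - (2 * pstar p ^ 2 - p ^ 2)))
        = Real.sqrt m * Real.sqrt (2 * (1 / 2 - ε) ^ 2 - (2 * pstar p ^ 2 - p ^ 2)) :=
      Real.sqrt_mul (by linarith) _
    have h3 := mul_le_mul_of_nonneg_left hgap hsm0.le
    have hq' : Real.sqrt m * (2 / Real.sqrt m) = 2 := by field_simp
    nlinarith [h1, h2, h3, hq']
  · intro U hU0 hU2
    have harg : Real.sqrt m ^ 2 * Real.sqrt (2 * (1 / 2 - ε) ^ 2 - (2 * pstar p ^ 2 - p ^ 2)) ^ 2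
        = (m : ℝ) * (2 * (1 / 2 - ε) ^ 2 - (2 * pstar p ^ 2 - p ^ 2)) := by
      rw [hub2, hsm2, hS2]
    have harg2 : Real.sqrt m ^ 2 * (Real.sqrt ((2 * pstar p ^ 2 - p ^ 2) + 2 * ε ^ 2) ^ 2 - 2 * ε ^ 2)
        = (m : ℝ) * (2 * pstar p ^ 2 - p ^ 2) := by
      rw [hR2, hsm2, hS2]; ring
    have h1 := hKF U hU0 (by linarith [harg])
    linarith [h1, harg2]

-- const-vector distance-squared computation
lemma Qconst {m : ℕ} (b : Fin m → Bool) (z : ℝ) :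
    ∑ t, (z - (if b t then (1:ℝ) else 0)) ^ 2
      = ((Finset.univ.filter fun t => b t = true).card : ℝ) * (1 - 2 * z) + m * z ^ 2 := by
  classical
  rw [← Finset.sum_filter_add_sum_filter_not Finset.univ (fun t => b t = true)]
  have h1 : ∑ t ∈ Finset.univ.filter (fun t => b t = true), (z - (if b t then (1:ℝ) else 0)) ^ 2
      = ((Finset.univ.filter fun t => b t = true).card : ℝ) * (z - 1) ^ 2 := by
    rw [Finset.sum_congr rfl (fun t ht => ?_), Finset.sum_const, nsmul_eq_mul]
    have hb := (Finset.mem_filter.mp ht).2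
    rw [if_pos hb]
  have h2 : ∑ t ∈ Finset.univ.filter (fun t => ¬ (b t = true)), (z - (if b t then (1:ℝ) else 0)) ^ 2
      = ((Finset.univ.filter fun t => ¬ (b t = true)).card : ℝ) * z ^ 2 := by
    rw [Finset.sum_congr rfl (fun t ht => ?_), Finset.sum_const, nsmul_eq_mul]
    have hb := (Finset.mem_filter.mp ht).2
    rw [if_neg hb]
    ring
  rw [h1, h2]
  have hcard := Finset.card_filter_add_card_filter_not (s := Finset.univ)
    (p := fun t : Fin m => b t = true)
  have hcard' : ((Finset.univ.filter fun t : Fin m => ¬ (b t = true)).card : ℝ)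
      = (m : ℝ) - ((Finset.univ.filter fun t : Fin m => b t = true).card : ℝ) := by
    have : (Finset.univ.filter fun t : Fin m => b t = true).card
        + (Finset.univ.filter fun t : Fin m => ¬ (b t = true)).card = m := by
      simpa using hcard
    have := congrArg (fun k : ℕ => (k : ℝ)) this
    push_cast at this
    linarith
  rw [hcard']
  ring

-- flip one coordinate from true to false
lemma Qflip {m : ℕ} (b : Fin m → Bool) (t₀ : Fin m) (hb : b t₀ = true) (v : Fin m → ℝ) :
    ∑ t, (v t - (if Function.update b t₀ false t then (1:ℝ) else 0)) ^ 2
      = (∑ t, (v t - (if b t then (1:ℝ) else 0)) ^ 2) + ((v t₀) ^ 2 - (v t₀ - 1) ^ 2) := by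
  classical
  have e1 : ∑ t, (v t - (if Function.update b t₀ false t then (1:ℝ) else 0)) ^ 2
      = (v t₀ - (if Function.update b t₀ false t₀ then (1:ℝ) else 0)) ^ 2
        + ∑ t ∈ Finset.univ.erase t₀, (v t - (if Function.update b t₀ false t then (1:ℝ) else 0)) ^ 2 :=
    (Finset.add_sum_erase _ _ (Finset.mem_univ t₀)).symm
  have e2 : ∑ t, (v t - (if b t then (1:ℝ) else 0)) ^ 2
      = (v t₀ - (if b t₀ then (1:ℝ) else 0)) ^ 2
        + ∑ t ∈ Finset.univ.erase t₀, (v t - (if b t then (1:ℝ) else 0)) ^ 2 :=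
    (Finset.add_sum_erase _ _ (Finset.mem_univ t₀)).symm
  have e3 : ∑ t ∈ Finset.univ.erase t₀, (v t - (if Function.update b t₀ false t then (1:ℝ) else 0)) ^ 2
      = ∑ t ∈ Finset.univ.erase t₀, (v t - (if b t then (1:ℝ) else 0)) ^ 2 := by
    refine Finset.sum_congr rfl fun t ht => ?_
    rw [Function.update_of_ne (Finset.ne_of_mem_erase ht)]
  rw [e1, e2, e3, Function.update_self, hb]
  simp only [Bool.false_eq_true, if_false, if_true]
  ring

lemma Kflip {m : ℕ} (b : Fin m → Bool) (t₀ : Fin m) (hb : b t₀ = true) :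
    (Finset.univ.filter fun t => Function.update b t₀ false t = true).card
      < (Finset.univ.filter fun t => b t = true).card := by
  classical
  have hset : (Finset.univ.filter fun t => Function.update b t₀ false t = true)
      = (Finset.univ.filter fun t => b t = true).erase t₀ := by
    ext t
    simp only [Finset.mem_filter, Finset.mem_erase, Finset.mem_univ, true_and]
    by_cases ht : t = t₀
    · subst ht
      simp [Function.update_self]
    · rw [Function.update_of_ne ht]
      tauto
  rw [hset]
  exact Finset.card_erase_lt_of_mem (Finset.mem_filter.mpr ⟨Finset.mem_univ _, hb⟩)

lemma utility_nonneg {n m : ℕ} (i : Fin n) (r : Fin n → Fin m → ℝ) (y : Fin m → ℝ) :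
    0 ≤ utility i r y := by
  unfold utility
  apply div_nonneg _ (Nat.cast_nonneg _)
  split <;> norm_num

lemma utility_le_one {n m : ℕ} (i : Fin n) (r : Fin n → Fin m → ℝ) (y : Fin m → ℝ) :
    utility i r y ≤ 1 := by
  unfold utility
  by_cases h : i ∈ winner r y
  · rw [if_pos h]
    have hc : 0 < (winner r y).card := Finset.card_pos.mpr ⟨i, h⟩
    rw [div_le_one (by exact_mod_cast hc)]
    exact_mod_cast hc
  · rw [if_neg h, zero_div]
    norm_num

lemma mem_winner_iff {n m : ℕ} (k : Fin n) (r : Fin n → Fin m → ℝ) (y : Fin m → ℝ) :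
    k ∈ winner r y ↔ ∀ l : Fin n,
      l2norm (fun t => r k t - y t) ≤ l2norm (fun t => r l t - y t) := by
  unfold winner
  simp

lemma utility_eq_one {n m : ℕ} (i : Fin n) (r : Fin n → Fin m → ℝ) (y : Fin m → ℝ)
    (h : ∀ l : Fin n, l ≠ i → l2norm (fun t => r i t - y t) < l2norm (fun t => r l t - y t)) :
    utility i r y = 1 := by
  have hw : winner r y = {i} := by
    ext k
    rw [mem_winner_iff, Finset.mem_singleton]
    constructor
    · intro hk
      by_contra hki
      exact absurd (hk i) (not_le.mpr (h k hki))
    · intro hk l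
      rw [hk]
      rcases eq_or_ne l i with rfl | hl
      · exact le_refl _
      · exact (h l hl).le
  unfold utility
  rw [hw]
  simp

lemma utility_eq_zero {n m : ℕ} (i : Fin n) (r : Fin n → Fin m → ℝ) (y : Fin m → ℝ)
    (h : ∃ l : Fin n, l2norm (fun t => r l t - y t) < l2norm (fun t => r i t - y t)) :
    utility i r y = 0 := by
  obtain ⟨l, hl⟩ := h
  have hi : i ∉ winner r y := by
    rw [mem_winner_iff]
    push_neg
    exact ⟨l, hl⟩
  unfold utility
  rw [if_neg hi, zero_div]

lemma main_det (m n : ℕ) (p ε : ℝ) (hm : 21 ≤ m) (hp0 : 0 < p) (hp2 : p < 1 / 2) (hε0 : 0 < ε)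
    (hεc : ε < 1 / 2 - Real.sqrt (pstar p * (1 - pstar p)) - 2 / Real.sqrt m)
    (hn : 2 ≤ n) (i : Fin n) (s : Fin n → Fin m → ℝ)
    (hxbox : ∀ t, s i t ∈ Set.Icc (0:ℝ) 1)
    (hxa : ApproxTruthful ε (s i) (fun _ => p))
    (hjp : ∀ j, j ≠ i → (∀ t, s j t ∈ Set.Icc (0:ℝ) 1) ∧ ApproxTruthful ε (s j) (fun _ => 1/2)) :
    (∀ b : Fin m → Bool, utility i s (fun t => if b t then 1 else 0)
        ≤ utility i (Function.update s i fun _ => pstar p) (fun t => if b t then 1 else 0)) ∧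
    (∃ b : Fin m → Bool, utility i s (fun t => if b t then 1 else 0) = 0 ∧
        utility i (Function.update s i fun _ => pstar p) (fun t => if b t then 1 else 0) = 1) := by
  classical
  obtain ⟨Rr, hsm0, hεd, hS2lb, hB2pos, hR0, hR2, hKC2, hKF⟩ :=
    key_arith m p ε hm hp0 hp2 hε0 hεc
  have hm21 : (21 : ℝ) ≤ (m : ℝ) := by exact_mod_cast hm
  have hsm2 : Real.sqrt m ^ 2 = (m : ℝ) := Real.sq_sqrt (by linarith)
  have hP14 : pstar p = 1 / 4 + p / 2 := by unfold pstar; ring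
  have hεsm : 0 ≤ ε * Real.sqrt m := by positivity
  -- square comparison helpers
  have eq_of_sq : ∀ a b : ℝ, 0 ≤ a → 0 ≤ b → a ^ 2 = b ^ 2 → a = b := by
    intro a b ha hb h
    calc a = Real.sqrt (a ^ 2) := (Real.sqrt_sq ha).symm
      _ = Real.sqrt (b ^ 2) := by rw [h]
      _ = b := Real.sqrt_sq hb
  have le_of_sq : ∀ a b : ℝ, 0 ≤ b → a ^ 2 ≤ b ^ 2 → a ≤ b := by
    intro a b hb h
    calc a ≤ |a| := le_abs_self a
      _ = Real.sqrt (a ^ 2) := (Real.sqrt_sq_eq_abs a).symm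
      _ ≤ Real.sqrt (b ^ 2) := Real.sqrt_le_sqrt h
      _ = b := Real.sqrt_sq hb
  have lt_of_sq : ∀ a b : ℝ, 0 ≤ b → a ^ 2 < b ^ 2 → a < b := by
    intro a b hb h
    calc a ≤ |a| := le_abs_self a
      _ = Real.sqrt (a ^ 2) := (Real.sqrt_sq_eq_abs a).symm
      _ < Real.sqrt (b ^ 2) := Real.sqrt_lt_sqrt (sq_nonneg a) h
      _ = b := Real.sqrt_sq hb
  have hxd : l2norm (fun t => s i t - p) ≤ ε * Real.sqrt m := by
    have := approx_le hxa hsm0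
    simpa using this
  have hjd : ∀ j, j ≠ i → l2norm (fun t => s j t - 1/2) ≤ ε * Real.sqrt m := by
    intro j hj
    have := approx_le (hjp j hj).2 hsm0
    simpa using this
  have hcdist : ∀ b : Fin m → Bool,
      l2norm (fun t => (1:ℝ)/2 - (if b t then (1:ℝ) else 0)) = Real.sqrt m * (1/2) := by
    intro b
    refine eq_of_sq _ _ (l2norm_nonneg _) (by positivity) ?_
    rw [l2norm_sq, Qconst b (1/2), mul_pow, hsm2]
    ring
  have hjlow : ∀ b : Fin m → Bool, ∀ j, j ≠ i →
      Real.sqrt m * (1/2) - ε * Real.sqrt m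
        ≤ l2norm (fun t => s j t - (if b t then (1:ℝ) else 0)) := by
    intro b j hj
    have h1 := l2norm_sub_le (fun _ => (1:ℝ)/2) (s j) (fun t => if b t then (1:ℝ) else 0)
    have h2 : l2norm (fun t => (1:ℝ)/2 - s j t) ≤ ε * Real.sqrt m := by
      rw [l2norm_sub_comm]
      exact hjd j hj
    have h3 := hcdist b
    rw [h3] at h1
    linarith
  have hjhigh : ∀ b : Fin m → Bool, ∀ j, j ≠ i →
      l2norm (fun t => s j t - (if b t then (1:ℝ) else 0))
        ≤ Real.sqrt m * (1/2) + ε * Real.sqrt m := by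
    intro b j hj
    have h1 := l2norm_sub_le (s j) (fun _ => (1:ℝ)/2) (fun t => if b t then (1:ℝ) else 0)
    have h2 : l2norm (fun t => s j t - (1:ℝ)/2) ≤ ε * Real.sqrt m := hjd j hj
    have h3 := hcdist b
    rw [h3] at h1
    linarith
  have hxlow : ∀ b : Fin m → Bool,
      l2norm (fun t => p - (if b t then (1:ℝ) else 0)) - ε * Real.sqrt m
        ≤ l2norm (fun t => s i t - (if b t then (1:ℝ) else 0)) := by
    intro b
    have h1 := l2norm_sub_le (fun _ => p) (s i) (fun t => if b t then (1:ℝ) else 0)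
    have h2 : l2norm (fun t => p - s i t) ≤ ε * Real.sqrt m := by
      rw [l2norm_sub_comm]
      exact hxd
    linarith
  have hrsq : ∀ b : Fin m → Bool,
      l2norm (fun t => pstar p - (if b t then (1:ℝ) else 0)) ^ 2
        = (l2norm (fun t => p - (if b t then (1:ℝ) else 0)) ^ 2
            + m * (2 * pstar p ^ 2 - p ^ 2)) / 2 := by
    intro b
    rw [l2norm_sq, l2norm_sq, Qconst b (pstar p), Qconst b p, hP14]
    ring
  -- the H1 step : if some opponent j is at least as close as r* at b, then
  -- the p̄-distance U at b is large
  have hH1 : ∀ b : Fin m → Bool, ∀ j, j ≠ i →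
      l2norm (fun t => s j t - (if b t then (1:ℝ) else 0))
        ≤ l2norm (fun t => pstar p - (if b t then (1:ℝ) else 0)) →
      (m : ℝ) * (2 * (1/2 - ε) ^ 2 - (2 * pstar p ^ 2 - p ^ 2))
        ≤ l2norm (fun t => p - (if b t then (1:ℝ) else 0)) ^ 2 := by
    intro b j hji hle
    have h1 : Real.sqrt m * (1/2) - ε * Real.sqrt m
        ≤ l2norm (fun t => pstar p - (if b t then (1:ℝ) else 0)) :=
      le_trans (hjlow b j hji) hle
    have hε14 : ε < 1/4 := by linarith [hp0]
    have hnn : 0 ≤ Real.sqrt m * (1/2) - ε * Real.sqrt m := by nlinarith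
    have h2 := pow_le_pow_left₀ hnn h1 2
    rw [hrsq b] at h2
    have h3 : (Real.sqrt m * (1/2) - ε * Real.sqrt m) ^ 2 = (m:ℝ) * (1/2 - ε) ^ 2 := by
      rw [show Real.sqrt m * (1/2) - ε * Real.sqrt m = Real.sqrt m * (1/2 - ε) by ring,
        mul_pow, hsm2]
    nlinarith [h2, h3]
  -- no-loss contradiction
  have hcontra : ∀ b : Fin m → Bool, ∀ j, j ≠ i →
      l2norm (fun t => s j t - (if b t then (1:ℝ) else 0))
        ≤ l2norm (fun t => pstar p - (if b t then (1:ℝ) else 0)) →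
      l2norm (fun t => s i t - (if b t then (1:ℝ) else 0))
        ≤ l2norm (fun t => s j t - (if b t then (1:ℝ) else 0)) → False := by
    intro b j hji hle hwin
    have hU0 : 0 ≤ l2norm (fun t => p - (if b t then (1:ℝ) else 0)) := l2norm_nonneg _
    have hU2 := hH1 b j hji hle
    have hUbig := hKC2 _ hU0 hU2
    have h3 : l2norm (fun t => p - (if b t then (1:ℝ) else 0)) - ε * Real.sqrt m
        ≤ l2norm (fun t => pstar p - (if b t then (1:ℝ) else 0)) :=
      le_trans (by linarith [hxlow b]) (le_trans hwin hle)
    have hRsm : 0 ≤ Real.sqrt m * Rr := by positivity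
    have h3sq : (l2norm (fun t => p - (if b t then (1:ℝ) else 0)) - ε * Real.sqrt m) ^ 2
        ≤ (l2norm (fun t => p - (if b t then (1:ℝ) else 0)) ^ 2
            + m * (2 * pstar p ^ 2 - p ^ 2)) / 2 := by
      have hnn : 0 ≤ l2norm (fun t => p - (if b t then (1:ℝ) else 0)) - ε * Real.sqrt m := by
        nlinarith [hR0, mul_nonneg hR0 hsm0.le]
      have := pow_le_pow_left₀ hnn h3 2
      rwa [hrsq b] at this
    have h4 : (l2norm (fun t => p - (if b t then (1:ℝ) else 0)) - 2 * (ε * Real.sqrt m)) ^ 2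
        ≤ (Real.sqrt m * Rr) ^ 2 := by
      nlinarith [hsm2, h3sq, hR2]
    have h5 := le_of_sq _ _ hRsm h4
    nlinarith [hUbig]
  -- Part 1
  have hBall : ∀ b : Fin m → Bool, utility i s (fun t => if b t then 1 else 0)
      ≤ utility i (Function.update s i fun _ => pstar p) (fun t => if b t then 1 else 0) := by
    intro b
    by_cases hiw : i ∈ winner s (fun t => if b t then (1:ℝ) else 0)
    · have hwin := (mem_winner_iff i s _).mp hiw
      have hone : utility i (Function.update s i fun _ => pstar p)
          (fun t => if b t then (1:ℝ) else 0) = 1 := by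
        apply utility_eq_one
        intro l hli
        have hupd : (fun t => Function.update s i (fun _ => pstar p) i t
            - (if b t then (1:ℝ) else 0)) = fun t => pstar p - (if b t then (1:ℝ) else 0) := by
          funext t
          rw [Function.update_self]
        have hupd2 : (fun t => Function.update s i (fun _ => pstar p) l t
            - (if b t then (1:ℝ) else 0)) = fun t => s l t - (if b t then (1:ℝ) else 0) := by
          funext t
          rw [Function.update_of_ne hli]
        rw [hupd, hupd2]
        by_contra hq
        push_neg at hq
        exact hcontra b l hli hq (hwin l)
      rw [hone]
      exact utility_le_one _ _ _
    · have hz : utility i s (fun t => if b t then (1:ℝ) else 0) = 0 := by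
        unfold utility
        rw [if_neg hiw, zero_div]
      rw [hz]
      exact utility_nonneg _ _ _
  refine ⟨hBall, ?_⟩
  obtain ⟨j₁, hj₁⟩ : ∃ j : Fin n, j ≠ i := by
    have : Nontrivial (Fin n) := Fin.nontrivial_iff_two_le.mpr hn
    exact exists_ne i
  by_cases hA : ∃ b : Fin m → Bool, ∃ j, j ≠ i ∧
      l2norm (fun t => s j t - (if b t then (1:ℝ) else 0))
        ≤ l2norm (fun t => pstar p - (if b t then (1:ℝ) else 0))
  · -- Case 2
    obtain ⟨bp, hbp, hminp⟩ := Finset.exists_min_image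
      (Finset.univ.filter fun b : Fin m → Bool => ∃ j, j ≠ i ∧
        l2norm (fun t => s j t - (if b t then (1:ℝ) else 0))
          ≤ l2norm (fun t => pstar p - (if b t then (1:ℝ) else 0)))
      (fun b => (Finset.univ.filter fun t => b t = true).card)
      (by
        obtain ⟨b, hb⟩ := hA
        exact ⟨b, Finset.mem_filter.mpr ⟨Finset.mem_univ _, hb⟩⟩)
    obtain ⟨j₀, hj₀i, hj₀le⟩ := (Finset.mem_filter.mp hbp).2
    have hε14 : ε < 1/4 := by linarith [hp0]
    have ht₀ : ∃ t₀, bp t₀ = true := by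
      by_contra hall
      push_neg at hall
      have hK0 : ((Finset.univ.filter fun t => bp t = true).card : ℝ) = 0 := by
        norm_cast
        rw [Finset.card_eq_zero, Finset.filter_eq_empty_iff]
        intro t _
        simp [hall t]
      have hrval : l2norm (fun t => pstar p - (if bp t then (1:ℝ) else 0))
          = Real.sqrt m * pstar p := by
        refine eq_of_sq _ _ (l2norm_nonneg _) (by nlinarith [hsm0.le]) ?_
        rw [l2norm_sq, Qconst bp (pstar p), hK0, mul_pow, hsm2]
        ring
      have hchain := le_trans (hjlow bp j₀ hj₀i) (le_trans hj₀le (le_of_eq hrval))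
      nlinarith [hchain, hsm0, hP14]
    obtain ⟨t₀, ht₀⟩ := ht₀
    -- the gain outcome
    refine ⟨Function.update bp t₀ false, ?_, ?_⟩
    · -- utility under s is 0 : j₀ strictly beats s i at the flipped outcome
      apply utility_eq_zero
      refine ⟨j₀, ?_⟩
      have hU0p : 0 ≤ l2norm (fun t => p - (if bp t then (1:ℝ) else 0)) := l2norm_nonneg _
      have hU2p := hH1 bp j₀ hj₀i hj₀le
      -- U at flipped outcome
      have hUflip : l2norm (fun t => p - (if Function.update bp t₀ false t then (1:ℝ) else 0)) ^ 2
          = l2norm (fun t => p - (if bp t then (1:ℝ) else 0)) ^ 2 + (2 * p - 1) := by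
        rw [l2norm_sq, l2norm_sq, Qflip bp t₀ ht₀ (fun _ => p)]
        ring
      have hU2s : (m : ℝ) * (2 * (1/2 - ε) ^ 2 - (2 * pstar p ^ 2 - p ^ 2)) - 1
          ≤ l2norm (fun t => p - (if Function.update bp t₀ false t then (1:ℝ) else 0)) ^ 2 := by
        rw [hUflip]
        nlinarith [hU2p]
      have hUs0 : 0 ≤ l2norm (fun t => p - (if Function.update bp t₀ false t then (1:ℝ) else 0)) :=
        l2norm_nonneg _
      have hKFs := hKF _ hUs0 hU2s
      -- lower bound U* ≥ ε√m
      have hargB : (0:ℝ) ≤ (m : ℝ) * (2 * (1/2 - ε) ^ 2 - (2 * pstar p ^ 2 - p ^ 2)) :=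
        mul_nonneg (by linarith) hB2pos
      have hV := hKC2 (Real.sqrt ((m : ℝ) * (2 * (1/2 - ε) ^ 2 - (2 * pstar p ^ 2 - p ^ 2))))
        (Real.sqrt_nonneg _) (le_of_eq (Real.sq_sqrt hargB).symm)
      have hVsq := Real.sq_sqrt hargB
      have hX0 : (0:ℝ) ≤ (2 * ε + Rr) * Real.sqrt m + 2 := by positivity
      have hXsq := mul_self_le_mul_self hX0 hV
      have hUεlb : ε * Real.sqrt m ≤
          l2norm (fun t => p - (if Function.update bp t₀ false t then (1:ℝ) else 0)) := by
        refine le_of_sq _ _ hUs0 ?_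
        nlinarith [hXsq, hVsq, hU2s, mul_nonneg hR0 hsm0.le, hεsm,
          mul_nonneg (mul_nonneg hε0.le hR0) (sq_nonneg (Real.sqrt m)),
          sq_nonneg (Rr * Real.sqrt m), sq_nonneg (ε * Real.sqrt m)]
      have hxlow2 := hxlow (Function.update bp t₀ false)
      have hsilb : 0 ≤ l2norm (fun t => p - (if Function.update bp t₀ false t then (1:ℝ) else 0))
          - ε * Real.sqrt m := by linarith
      have hsisq : (l2norm (fun t => p - (if Function.update bp t₀ false t then (1:ℝ) else 0))
            - ε * Real.sqrt m) ^ 2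
          ≤ l2norm (fun t => s i t - (if Function.update bp t₀ false t then (1:ℝ) else 0)) ^ 2 :=
        pow_le_pow_left₀ hsilb (by linarith [hxlow2]) 2
      -- opponent j₀ squared distance at the flipped outcome
      have hQjflip : l2norm (fun t => s j₀ t - (if Function.update bp t₀ false t then (1:ℝ) else 0)) ^ 2
          = l2norm (fun t => s j₀ t - (if bp t then (1:ℝ) else 0)) ^ 2
            + ((s j₀ t₀) ^ 2 - (s j₀ t₀ - 1) ^ 2) := by
        rw [l2norm_sq, l2norm_sq, Qflip bp t₀ ht₀ (s j₀)]
      have hbox := (hjp j₀ hj₀i).1 t₀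
      have hQjle : l2norm (fun t => s j₀ t - (if bp t then (1:ℝ) else 0)) ^ 2
          ≤ l2norm (fun t => pstar p - (if bp t then (1:ℝ) else 0)) ^ 2 :=
        pow_le_pow_left₀ (l2norm_nonneg _) hj₀le 2
      have hQr := hrsq bp
      have hfinal : l2norm (fun t => s j₀ t - (if Function.update bp t₀ false t then (1:ℝ) else 0)) ^ 2
          < l2norm (fun t => s i t - (if Function.update bp t₀ false t then (1:ℝ) else 0)) ^ 2 := by
        have hb2 := hbox.2
        linarith [hQjflip, hQjle, hQr, hUflip, hKFs, hsisq, sq_nonneg (s j₀ t₀ - 1)]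
      exact lt_of_sq _ _ (l2norm_nonneg _) hfinal
    · -- utility under the deviation is 1 : r* strictly beats everyone at the flipped outcome
      apply utility_eq_one
      intro l hli
      have hupd : (fun t => Function.update s i (fun _ => pstar p) i t
          - (if Function.update bp t₀ false t then (1:ℝ) else 0))
          = fun t => pstar p - (if Function.update bp t₀ false t then (1:ℝ) else 0) := by
        funext t
        rw [Function.update_self]
      have hupd2 : (fun t => Function.update s i (fun _ => pstar p) l t
          - (if Function.update bp t₀ false t then (1:ℝ) else 0))
          = fun t => s l t - (if Function.update bp t₀ false t then (1:ℝ) else 0) := by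
        funext t
        rw [Function.update_of_ne hli]
      rw [hupd, hupd2]
      by_contra hcon
      push_neg at hcon
      have hmem : Function.update bp t₀ false ∈
          (Finset.univ.filter fun b : Fin m → Bool => ∃ j, j ≠ i ∧
            l2norm (fun t => s j t - (if b t then (1:ℝ) else 0))
              ≤ l2norm (fun t => pstar p - (if b t then (1:ℝ) else 0))) :=
        Finset.mem_filter.mpr ⟨Finset.mem_univ _, l, hli, hcon⟩
      have hcard := hminp _ hmem
      exact absurd hcard (not_le.mpr (Kflip bp t₀ ht₀))
  · -- Case 1
    push_neg at hA
    refine ⟨fun _ => true, ?_, ?_⟩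
    · apply utility_eq_zero
      refine ⟨j₁, ?_⟩
      have hKm : ((Finset.univ.filter fun t : Fin m => (fun _ : Fin m => true) t = true).card : ℝ)
          = m := by
        norm_cast
        simp
      have hpd : l2norm (fun t : Fin m => p - (if (fun _ : Fin m => true) t then (1:ℝ) else 0))
          = Real.sqrt m * (1 - p) := by
        refine eq_of_sq _ _ (l2norm_nonneg _) (by nlinarith [hsm0.le]) ?_
        rw [l2norm_sq, Qconst (fun _ : Fin m => true) p, hKm, mul_pow, hsm2]
        ring
      have h1 := hjhigh (fun _ : Fin m => true) j₁ hj₁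
      have h2 := hxlow (fun _ : Fin m => true)
      rw [hpd] at h2
      have h3 : Real.sqrt m * (1/2) + ε * Real.sqrt m
          < Real.sqrt m * (1 - p) - ε * Real.sqrt m := by nlinarith [hsm0]
      exact lt_of_le_of_lt h1 (lt_of_lt_of_le h3 h2)
    · apply utility_eq_one
      intro l hli
      have hupd : (fun t => Function.update s i (fun _ => pstar p) i t
          - (if (fun _ : Fin m => true) t then (1:ℝ) else 0))
          = fun t => pstar p - (if (fun _ : Fin m => true) t then (1:ℝ) else 0) := by
        funext t
        rw [Function.update_self]
      have hupd2 : (fun t => Function.update s i (fun _ => pstar p) l t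
          - (if (fun _ : Fin m => true) t then (1:ℝ) else 0))
          = fun t => s l t - (if (fun _ : Fin m => true) t then (1:ℝ) else 0) := by
        funext t
        rw [Function.update_of_ne hli]
      rw [hupd, hupd2]
      exact hA (fun _ : Fin m => true) l hli


/-- **Corollary (no approximately truthful equilibrium).** Under Condition 1, let
`σ = (σ_1, …, σ_n)` be a profile of independent mixed strategies such that, almost surely,
`σ_i` produces reports in `[0,1]^m` that are ε-ℓ² approximately truthful w.r.t.
`p̄ = (p,…,p)` and each `σ_j` (`j ≠ i`) produces reports in `[0,1]^m` that are ε-ℓ²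
approximately truthful w.r.t. `c = (1/2,…,1/2)`.  With the outcome vector `Y ∈ {0,1}^m`
having independent Bernoulli(p) coordinates, independent of all reports, forecaster `i`'s
expected utility under `σ` is strictly less than her expected utility from unilaterally
deviating to the pure hedged report `r* = (p*,…,p*)`.  In particular, no ε-ℓ²
approximately truthful strategy profile is an equilibrium. -/
theorem no_approx_truthful_equilibrium (m n : ℕ) (p ε : ℝ) (hcond : Cond1 m p ε) (hn : 2 ≤ n)
    (i : Fin n) (σs : Fin n → Measure (Fin m → ℝ))
    [∀ j, IsProbabilityMeasure (σs j)]
    (hσi : ∀ᵐ x ∂(σs i),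
      (∀ t, x t ∈ Set.Icc (0 : ℝ) 1) ∧ ApproxTruthful ε x (fun _ => p))
    (hσj : ∀ j, j ≠ i → ∀ᵐ x ∂(σs j),
      (∀ t, x t ∈ Set.Icc (0 : ℝ) 1) ∧ ApproxTruthful ε x (fun _ => 1 / 2))
    (hInt1 : ∀ y : Fin m → ℝ,
      Integrable (fun s => utility i s y) (Measure.pi σs))
    (hInt2 : ∀ y : Fin m → ℝ,
      Integrable (fun s => utility i (Function.update s i fun _ => pstar p) y)
        (Measure.pi σs)) :
    ∑ b : Fin m → Bool, (∏ t, if b t then p else 1 - p) *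
        ∫ s, utility i s (fun t => if b t then 1 else 0) ∂(Measure.pi σs)
      < ∑ b : Fin m → Bool, (∏ t, if b t then p else 1 - p) *
          ∫ s, utility i (Function.update s i fun _ => pstar p)
            (fun t => if b t then 1 else 0) ∂(Measure.pi σs) := by
  classical
  obtain ⟨hm, ⟨hp0, hplt⟩, hε0, hεc⟩ := hcond
  have hp2 : p < 1 / 2 := lt_of_lt_of_le hplt (by
    nlinarith [Real.sqrt_nonneg ((2 / Real.sqrt m) * (1 - 2 / Real.sqrt m))])
  -- weights
  set w : (Fin m → Bool) → ℝ := fun b => ∏ t, if b t then p else 1 - p with hwdef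
  have hw0 : ∀ b, 0 < w b := by
    intro b
    refine Finset.prod_pos fun t _ => ?_
    split <;> linarith
  have hwlb : ∀ b, (min p (1 - p)) ^ m ≤ w b := by
    intro b
    rw [hwdef]
    calc (min p (1-p)) ^ m = ∏ _t : Fin m, min p (1 - p) := by
          rw [Finset.prod_const, Finset.card_univ, Fintype.card_fin]
      _ ≤ _ := by
          refine Finset.prod_le_prod (fun t _ => le_min (by linarith) (by linarith)) ?_
          intro t _
          split
          · exact min_le_left _ _
          · exact min_le_right _ _
  have hc0 : 0 < (min p (1 - p)) ^ m := pow_pos (lt_min hp0 (by linarith)) m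
  -- a.e. goodness of the product measure
  have hgood : ∀ᵐ sσ ∂(Measure.pi σs),
      (∀ t, sσ i t ∈ Set.Icc (0 : ℝ) 1) ∧ ApproxTruthful ε (sσ i) (fun _ => p) ∧
      ∀ j, j ≠ i → (∀ t, sσ j t ∈ Set.Icc (0 : ℝ) 1) ∧ ApproxTruthful ε (sσ j) (fun _ => 1/2) := by
    have h1 : ∀ᵐ sσ ∂(Measure.pi σs),
        (∀ t, sσ i t ∈ Set.Icc (0 : ℝ) 1) ∧ ApproxTruthful ε (sσ i) (fun _ => p) :=
      Measure.tendsto_eval_ae_ae.eventually hσi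
    have h2 : ∀ᵐ sσ ∂(Measure.pi σs), ∀ j, j ≠ i →
        ((∀ t, sσ j t ∈ Set.Icc (0 : ℝ) 1) ∧ ApproxTruthful ε (sσ j) (fun _ => 1/2)) := by
      rw [ae_all_iff]
      intro j
      by_cases hji : j = i
      · subst hji
        filter_upwards with x hx
        exact absurd rfl hx
      · have h3 : ∀ᵐ x ∂(σs j),
            (∀ t, x t ∈ Set.Icc (0 : ℝ) 1) ∧ ApproxTruthful ε x (fun _ => 1/2) := by
          have := hσj j hji
          filter_upwards [this] with x hx
          exact ⟨hx.1, by simpa using hx.2⟩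
        filter_upwards [Measure.tendsto_eval_ae_ae.eventually h3] with sσ hs _
        exact hs
    filter_upwards [h1, h2] with sσ ha hb
    exact ⟨ha.1, ha.2, hb⟩
  -- integrability of summands
  have hi1 : ∀ b : Fin m → Bool,
      Integrable (fun sσ => w b * utility i sσ (fun t => if b t then 1 else 0)) (Measure.pi σs) :=
    fun b => (hInt1 _).const_mul _
  have hi2 : ∀ b : Fin m → Bool,
      Integrable (fun sσ => w b * utility i (Function.update sσ i fun _ => pstar p)
        (fun t => if b t then 1 else 0)) (Measure.pi σs) :=
    fun b => (hInt2 _).const_mul _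
  have hF : Integrable (fun sσ => ∑ b : Fin m → Bool,
      w b * utility i sσ (fun t => if b t then 1 else 0)) (Measure.pi σs) :=
    integrable_finset_sum _ fun b _ => hi1 b
  have hG : Integrable (fun sσ => ∑ b : Fin m → Bool,
      w b * utility i (Function.update sσ i fun _ => pstar p)
        (fun t => if b t then 1 else 0)) (Measure.pi σs) :=
    integrable_finset_sum _ fun b _ => hi2 b
  -- rewrite both sides as integrals of sums
  have hL : ∑ b : Fin m → Bool, w b *
        ∫ sσ, utility i sσ (fun t => if b t then 1 else 0) ∂(Measure.pi σs)
      = ∫ sσ, (∑ b : Fin m → Bool,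
          w b * utility i sσ (fun t => if b t then 1 else 0)) ∂(Measure.pi σs) := by
    rw [integral_finset_sum _ fun b _ => hi1 b]
    exact Finset.sum_congr rfl fun b _ => (integral_const_mul _ _).symm
  have hR : ∑ b : Fin m → Bool, w b *
        ∫ sσ, utility i (Function.update sσ i fun _ => pstar p)
          (fun t => if b t then 1 else 0) ∂(Measure.pi σs)
      = ∫ sσ, (∑ b : Fin m → Bool,
          w b * utility i (Function.update sσ i fun _ => pstar p)
            (fun t => if b t then 1 else 0)) ∂(Measure.pi σs) := by
    rw [integral_finset_sum _ fun b _ => hi2 b]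
    exact Finset.sum_congr rfl fun b _ => (integral_const_mul _ _).symm
  rw [hL, hR]
  -- pointwise a.e. gap
  have hgap : ∀ᵐ sσ ∂(Measure.pi σs),
      (∑ b : Fin m → Bool, w b * utility i sσ (fun t => if b t then 1 else 0))
        + (min p (1 - p)) ^ m
      ≤ ∑ b : Fin m → Bool, w b * utility i (Function.update sσ i fun _ => pstar p)
          (fun t => if b t then 1 else 0) := by
    filter_upwards [hgood] with sσ hs
    obtain ⟨hBall, b₀, hb0, hb1⟩ := main_det m n p ε hm hp0 hp2 hε0 hεc hn i sσ hs.1 hs.2.1 hs.2.2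
    have key : ∀ b : Fin m → Bool,
        w b * utility i sσ (fun t => if b t then 1 else 0)
          + (if b = b₀ then (min p (1 - p)) ^ m else 0)
        ≤ w b * utility i (Function.update sσ i fun _ => pstar p)
            (fun t => if b t then 1 else 0) := by
      intro b
      by_cases hb : b = b₀
      · subst hb
        rw [if_pos rfl, hb0, hb1, mul_zero, mul_one, zero_add]
        exact hwlb b
      · rw [if_neg hb, add_zero]
        exact mul_le_mul_of_nonneg_left (hBall b) (hw0 b).le
    have hsum := Finset.sum_le_sum fun b (_ : b ∈ Finset.univ) => key b
    rw [Finset.sum_add_distrib, Finset.sum_ite_eq' Finset.univ b₀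
      (fun _ => (min p (1 - p)) ^ m)] at hsum
    simpa using hsum
  -- conclude
  have hmono : (∫ sσ, ((∑ b : Fin m → Bool,
        w b * utility i sσ (fun t => if b t then 1 else 0)) + (min p (1 - p)) ^ m)
          ∂(Measure.pi σs))
      ≤ ∫ sσ, (∑ b : Fin m → Bool,
          w b * utility i (Function.update sσ i fun _ => pstar p)
            (fun t => if b t then 1 else 0)) ∂(Measure.pi σs) :=
    integral_mono_ae (hF.add (integrable_const _)) hG
      (by
        filter_upwards [hgap] with sσ h
        simpa using h)
  rw [integral_add hF (integrable_const ((min p (1 - p)) ^ m)), integral_const,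
    probReal_univ] at hmono
  simp only [ENNReal.toReal_one, smul_eq_mul, one_mul] at hmono
  linarith [hmono, hc0]


end
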